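/- arXiv:2102.10911 — 6 statements merged into one kernel-verified Lean document; each statement's English description precedes it below -/
import Mathlib

section
/- Let σ be a real analytic function on an interval (α,β) with β>α. If there exists N ∈ ℕ such that for all w with sufficiently small absolute value the values σ((α+β)/2 + wn), n=1,…,N, are rationally dependent (i.e., linearly dependent over ℚ), then σ is a polynomial on (α,β). -/
/-!
At each small `w` the values `σ(c + w n)` satisfy some nonzero rational relation `λ`. There are
uncountably many `w` but only countably many `λ`, so one relation holds on a set with an
accumulation point, and by the identity theorem `∑ λₙ σ(c + w n) = 0` for all small `w`.
Comparing power series at `w = 0`, the `k`-th Taylor coefficient of `σ` at `c` is killed by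
`∑ λₙ nᵏ`, which is nonzero for large `k` because the largest `n` with `λₙ ≠ 0` dominates.
Hence the Taylor series of `σ` at `c` is a polynomial, and `σ` equals it on all of `(α, β)`.
-/

open Filter Set Topology Polynomial

theorem IsCompact.exists_accPt_of_forall_exists {X ι : Type*} [TopologicalSpace X] [Countable ι]
    {K : Set X} (hK : IsCompact K) (hKc : ¬ K.Countable) {P : ι → X → Prop}
    (h : ∀ x ∈ K, ∃ i, P i x) : ∃ i, ∃ x ∈ K, AccPt x (𝓟 {y ∈ K | P i y}) := by
  have hfiber : ∃ i, ¬ {y ∈ K | P i y}.Countable := by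
    by_contra! hcount
    refine hKc ((countable_iUnion hcount).mono fun x hx => ?_)
    obtain ⟨i, hi⟩ := h x hx
    exact mem_iUnion.mpr ⟨i, hx, hi⟩
  obtain ⟨i, hi⟩ := hfiber
  exact ⟨i, Set.Infinite.exists_accPt_of_subset_isCompact (fun hfin => hi hfin.countable) hK
    (sep_subset K _)⟩

theorem exists_rat_relation_eqOn_of_forall_not_linearIndependent {ι : Type*} [Fintype ι]
    {F : ι → ℝ → ℝ} {U : Set ℝ} (hU : IsOpen U) (hUc : IsPreconnected U) (hne : U.Nonempty)
    (hF : ∀ i, AnalyticOnNhd ℝ (F i) U)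
    (hdep : ∀ w ∈ U, ¬ LinearIndependent ℚ fun i => F i w) :
    ∃ a : ι → ℚ, a ≠ 0 ∧ EqOn (fun w => ∑ i, (a i : ℝ) * F i w) 0 U := by
  obtain ⟨x, hx⟩ := hne
  obtain ⟨r, hr, hball⟩ := Metric.isOpen_iff.mp hU x hx
  have hK : Metric.closedBall x (r / 2) ⊆ U :=
    (Metric.closedBall_subset_ball (half_lt_self hr)).trans hball
  have hKc : ¬ (Metric.closedBall x (r / 2)).Countable := by
    rw [Real.closedBall_eq_Icc, Cardinal.Real.Icc_countable_iff]
    linarith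
  have hrel : ∀ w ∈ Metric.closedBall x (r / 2), ∃ a : ι → ℚ,
      a ≠ 0 ∧ ∑ i, (a i : ℝ) * F i w = 0 := fun w hw => by
    obtain ⟨a, hsum, i, hi⟩ := Fintype.not_linearIndependent_iff.mp (hdep w (hK hw))
    exact ⟨a, fun h => hi (congrFun h i), by simpa [Rat.smul_def] using hsum⟩
  obtain ⟨a, x₀, hx₀, hacc⟩ :=
    (isCompact_closedBall x (r / 2)).exists_accPt_of_forall_exists hKc hrel
  have hfreq := accPt_iff_frequently_nhdsNE.mp hacc
  obtain ⟨-, -, ha, -⟩ := hfreq.exists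
  refine ⟨a, ha, ?_⟩
  exact (Finset.analyticOnNhd_fun_sum _ fun i _ => analyticOnNhd_const.mul (hF i))
    |>.eqOn_zero_of_preconnected_of_frequently_eq_zero hUc (hK hx₀) (hfreq.mono fun _ hw => hw.2.2)

theorem eventually_sum_mul_pow_ne_zero {ι : Type*} [Fintype ι] {a t : ι → ℝ}
    (ht : Function.Injective t) (ht₀ : ∀ i, 0 < t i) (ha : a ≠ 0) :
    ∀ᶠ k in atTop, ∑ i, a i * t i ^ k ≠ 0 := by
  classical
  obtain ⟨i₀, hi₀⟩ := Function.ne_iff.mp ha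
  obtain ⟨m, hm, hmax⟩ :=
    (Finset.univ.filter (a · ≠ 0)).exists_max_image t ⟨i₀, by simpa using hi₀⟩
  simp only [Finset.mem_filter, Finset.mem_univ, true_and] at hm hmax
  have hterm (i : ι) :
      Tendsto (fun k : ℕ => a i * (t i / t m) ^ k) atTop (𝓝 (if i = m then a m else 0)) := by
    by_cases him : i = m
    · subst him
      simp [div_self (ht₀ i).ne']
    by_cases hai : a i = 0
    · simp [hai, him]
    have hlt : t i / t m < 1 :=
      (div_lt_one (ht₀ m)).mpr ((hmax i hai).lt_of_ne (ht.ne him))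
    simpa [him] using
      (tendsto_pow_atTop_nhds_zero_of_lt_one (div_nonneg (ht₀ i).le (ht₀ m).le) hlt).const_mul (a i)
  have hsum := tendsto_finsetSum Finset.univ fun i _ => hterm i
  rw [Finset.sum_ite_eq' Finset.univ m, if_pos (Finset.mem_univ m)] at hsum
  filter_upwards [hsum.eventually_ne hm] with k hk hzero
  refine hk ?_
  simp only [div_pow, ← mul_div_assoc, ← Finset.sum_div, hzero, zero_div]

section PowerSeries

variable {𝕜 : Type*} [NontriviallyNormedField 𝕜]

theorem HasFPowerSeriesAt.sum_mul_comp_add_mul {f : 𝕜 → 𝕜} {p : FormalMultilinearSeries 𝕜 𝕜 𝕜}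
    {c : 𝕜} (hf : HasFPowerSeriesAt f p c) {ι : Type*} [Fintype ι] (a t : ι → 𝕜) :
    HasFPowerSeriesAt (fun w => ∑ i, a i * f (c + w * t i))
      (.ofScalars 𝕜 fun k => (∑ i, a i * t i ^ k) * p.coeff k) 0 := by
  rw [hasFPowerSeriesAt_iff] at hf ⊢
  have hdilate (i : ι) : ∀ᶠ w in 𝓝 (0 : 𝕜),
      HasSum (fun k => (w * t i) ^ k • p.coeff k) (f (c + w * t i)) :=
    (continuous_mul_const (t i)).tendsto' 0 0 (zero_mul _) |>.eventually hf
  filter_upwards [eventually_all.mpr hdilate] with w hw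
  have hcoeff : (fun k => w ^ k • (FormalMultilinearSeries.ofScalars 𝕜
      fun k => (∑ i, a i * t i ^ k) * p.coeff k).coeff k) =
      fun k => ∑ i, a i * ((w * t i) ^ k • p.coeff k) := by
    ext k
    simp only [FormalMultilinearSeries.coeff_ofScalars, smul_eq_mul, Finset.mul_sum,
      Finset.sum_mul]
    exact Finset.sum_congr rfl fun i _ => by ring
  rw [hcoeff, zero_add]
  exact hasSum_sum fun i _ => (hw i).mul_left (a i)

theorem HasFPowerSeriesAt.eventuallyEq_eval_of_eventually_coeff_eq_zero {f : 𝕜 → 𝕜}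
    {p : FormalMultilinearSeries 𝕜 𝕜 𝕜} {c : 𝕜} (hf : HasFPowerSeriesAt f p c)
    (hp : ∀ᶠ k in atTop, p.coeff k = 0) : ∃ P : 𝕜[X], f =ᶠ[𝓝 c] fun x => P.eval x := by
  obtain ⟨K, hK⟩ := eventually_atTop.mp hp
  refine ⟨∑ k ∈ Finset.range K, C (p.coeff k) * (X - C c) ^ k, ?_⟩
  filter_upwards [hasFPowerSeriesAt_iff'.mp hf] with z hz
  have hfinite : ∀ k ∉ Finset.range K, (z - c) ^ k • p.coeff k = 0 := fun k hk => by
    rw [hK k (by simpa using hk), smul_zero]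
  rw [← (hasSum_sum_of_ne_finset_zero hfinite).unique hz]
  simp [eval_finsetSum, mul_comm]

theorem AnalyticOnNhd.exists_polynomial_eqOn {f : 𝕜 → 𝕜} {U : Set 𝕜}
    (hf : AnalyticOnNhd 𝕜 f U) (hU : IsPreconnected U) {c : 𝕜} (hc : c ∈ U)
    {p : FormalMultilinearSeries 𝕜 𝕜 𝕜} (hp : HasFPowerSeriesAt f p c)
    (hcoeff : ∀ᶠ k in atTop, p.coeff k = 0) : ∃ P : 𝕜[X], EqOn f (fun x => P.eval x) U := by
  obtain ⟨P, hP⟩ := hp.eventuallyEq_eval_of_eventually_coeff_eq_zero hcoeff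
  exact ⟨P, hf.eqOn_of_preconnected_of_eventuallyEq
    ((AnalyticOnNhd.eval_polynomial P).mono (subset_univ U)) hU hc hP⟩

end PowerSeries

theorem HasFPowerSeriesAt.eventually_coeff_eq_zero_of_sum_mul_comp_eventuallyEq_zero
    {f : ℝ → ℝ} {p : FormalMultilinearSeries ℝ ℝ ℝ} {c : ℝ} (hf : HasFPowerSeriesAt f p c)
    {ι : Type*} [Fintype ι] {a t : ι → ℝ} (ht : Function.Injective t) (ht₀ : ∀ i, 0 < t i)
    (ha : a ≠ 0) (hrel : (fun w => ∑ i, a i * f (c + w * t i)) =ᶠ[𝓝 0] 0) :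
    ∀ᶠ k in atTop, p.coeff k = 0 := by
  have hzero := (hf.sum_mul_comp_add_mul a t).eq_zero_of_eventually hrel
  filter_upwards [eventually_sum_mul_pow_ne_zero ht ht₀ ha] with k hk
  have hk0 := (FormalMultilinearSeries.ofScalars_eq_zero ℝ k).mp (congrFun hzero k)
  exact (mul_eq_zero.mp hk0).resolve_left hk

/-- If σ is real analytic on (α,β) and there is N such that for all
sufficiently small w the values σ((α+β)/2 + w·n), n = 1,…,N, are rationally
dependent (not linearly independent over ℚ), then σ is a polynomial on (α,β). -/
theorem stmt0 (α β : ℝ) (hαβ : α < β) (σ : ℝ → ℝ)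
    (hσ : AnalyticOn ℝ σ (Set.Ioo α β))
    (h : ∃ N : ℕ, ∃ ε > (0:ℝ), ∀ w : ℝ, |w| < ε →
      ¬ LinearIndependent ℚ (fun n : Fin N => σ ((α + β) / 2 + w * ((n : ℕ) + 1)))) :
    ∃ p : Polynomial ℝ, ∀ x ∈ Set.Ioo α β, σ x = p.eval x := by
  obtain ⟨N, ε, hε, hdep⟩ := h
  have hσ' := isOpen_Ioo.analyticOn_iff_analyticOnNhd.mp hσ
  have hc : (α + β) / 2 ∈ Ioo α β := ⟨by linarith, by linarith⟩
  have hnear : ∀ᶠ w in 𝓝 (0 : ℝ),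
      |w| < ε ∧ ∀ n : Fin N, (α + β) / 2 + w * ((n : ℕ) + 1) ∈ Ioo α β := by
    refine ((continuous_abs.tendsto' 0 0 abs_zero).eventually (gt_mem_nhds hε)).and
      (eventually_all.mpr fun n => ?_)
    exact (Continuous.tendsto' (by fun_prop) 0 _ (by simp)).eventually (isOpen_Ioo.mem_nhds hc)
  obtain ⟨δ, hδ, hball⟩ := Metric.eventually_nhds_iff_ball.mp hnear
  obtain ⟨a, ha, hrel⟩ := exists_rat_relation_eqOn_of_forall_not_linearIndependent
    (F := fun (n : Fin N) w => σ ((α + β) / 2 + w * ((n : ℕ) + 1))) Metric.isOpen_ball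
    (convex_ball 0 δ).isPreconnected ⟨0, Metric.mem_ball_self hδ⟩
    (fun n w hw => (hσ' _ ((hball w hw).2 n)).comp
      (f := fun w => (α + β) / 2 + w * ((n : ℕ) + 1)) (by fun_prop))
    (fun w hw => hdep w (hball w hw).1)
  obtain ⟨p, hp⟩ := hσ' _ hc
  have hcoeff := hp.eventually_coeff_eq_zero_of_sum_mul_comp_eventuallyEq_zero
    (t := fun n : Fin N => ((n : ℕ) : ℝ) + 1) (fun n m h => Fin.ext (by simpa using h))
    (fun n => by positivity) (a := fun n => (a n : ℝ))
    (fun h => ha (funext fun n => by simpa using congrFun h n))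
    (eventuallyEq_of_mem (Metric.ball_mem_nhds 0 hδ) hrel)
  exact hσ'.exists_polynomial_eqOn isPreconnected_Ioo hc hp hcoeff
end

section
/- If real numbers a₁,…,a_N with N ≥ 2 are rationally independent, then each aₙ is nonzero and, moreover, for any nonzero integer m and any integers p₁,…,p_{N-1}, the numbers b_n = m·a_n/a_N - p_n for n = 1,…,N-1 are again rationally independent. -/
/-- If a₁,…,a_{N+1} are rationally independent (so N+1 ≥ 2), each aₙ
is nonzero, and for any nonzero integer m and integers p₁,…,p_N the numbers
bₙ = m·aₙ/a_{N+1} − pₙ (n = 1,…,N) are again rationally independent. -/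
theorem stmt3 (N : ℕ) (hN : 1 ≤ N) (a : Fin (N + 1) → ℝ)
    (ha : LinearIndependent ℚ a)
    (m : ℤ) (hm : m ≠ 0) (p : Fin N → ℤ)
    (b : Fin N → ℝ)
    (hb : ∀ n : Fin N, b n = (m : ℝ) * a n.castSucc / a (Fin.last N) - p n) :
    (∀ n, a n ≠ 0) ∧ LinearIndependent ℚ b := by
  have haN : a (Fin.last N) ≠ 0 := ha.ne_zero _
  refine ⟨fun n => ha.ne_zero n, ?_⟩
  rw [Fintype.linearIndependent_iff]
  intro g hg i
  have hg' : ∑ j, (g j : ℝ) * b j = 0 := by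
    simpa [Rat.smul_def] using hg
  set S : ℚ := ∑ j, g j * (p j : ℚ) with hS
  have e : ∀ j : Fin N, (g j : ℝ) * b j =
      ((m : ℝ) * g j * a j.castSucc) / a (Fin.last N) - g j * p j := by
    intro j
    rw [hb]
    field_simp
  rw [Finset.sum_congr rfl (fun j _ => e j), Finset.sum_sub_distrib,
    sub_eq_zero, ← Finset.sum_div] at hg'
  have hS' : (∑ j, (g j : ℝ) * (p j : ℝ)) = (S : ℝ) := by
    rw [hS]; push_cast; ring
  rw [hS', div_eq_iff haN] at hg'
  -- Build the big coefficient family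
  set G : Fin (N + 1) → ℚ := Fin.lastCases (-S) (fun j => (m : ℚ) * g j) with hG
  have hGsum : ∑ j, G j • a j = 0 := by
    rw [Fin.sum_univ_castSucc]
    simp only [hG, Fin.lastCases_castSucc, Fin.lastCases_last, Rat.smul_def]
    push_cast
    rw [hg']
    ring
  have hGzero := Fintype.linearIndependent_iff.mp ha G hGsum
  have := hGzero i.castSucc
  simp only [hG, Fin.lastCases_castSucc, mul_eq_zero] at this
  rcases this with h | h
  · exact absurd h (by exact_mod_cast hm)
  · exact h
end

section
/- Let σ : ℝ → ℝ be a function having a second derivative at a point x₀ with σ''(x₀) ≠ 0. Then for every C > 0 and ε > 0 there exists δ > 0 such that for all x with |x| < C, |(σ''(x₀))⁻¹ · δ⁻² · (σ(x₀+xδ) + σ(x₀−xδ) − 2σ(x₀)) − x²| < ε. -/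
/-!
Taylor's theorem with Peano remainder at `x₀ ± h` gives
`σ (x₀ + h) + σ (x₀ - h) - 2 σ x₀ = c h² + o(h²)`, the first-order terms cancelling.
Substituting `h = x δ` and dividing by `c δ²`, the error is `o(1) · x²`, which is uniformly small
on `|x| < C` once `δ` is small.
-/

open Filter Topology Asymptotics Metric

theorem isLittleO_taylor_remainder_two {E : Type*} [NormedAddCommGroup E] [NormedSpace ℝ E]
    {f f' : ℝ → E} {x₀ : ℝ} {c : E}
    (hf : ∀ᶠ x in 𝓝 x₀, HasDerivAt f (f' x) x) (hf' : HasDerivAt f' c x₀) :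
    (fun x => f x - f x₀ - (x - x₀) • f' x₀ - ((x - x₀) ^ 2 / 2) • c) =o[𝓝 x₀]
      fun x => (x - x₀) ^ 2 := by
  obtain ⟨r, hr, hball⟩ := eventually_nhds_iff_ball.mp hf
  have hnhds : 𝓝[ball x₀ r] x₀ = 𝓝 x₀ := nhdsWithin_eq_nhds.mpr (ball_mem_nhds x₀ hr)
  have hderiv : ∀ x ∈ ball x₀ r, HasDerivWithinAt
      (fun x => f x - f x₀ - (x - x₀) • f' x₀ - ((x - x₀) ^ 2 / 2) • c)
      (f' x - f' x₀ - (x - x₀) • c) (ball x₀ r) x := by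
    intro x hx
    have hlin : HasDerivAt (fun x : ℝ => x - x₀) 1 x := (hasDerivAt_id' x).sub_const x₀
    have hsq : HasDerivAt (fun x : ℝ => (x - x₀) ^ 2 / 2) (x - x₀) x := by
      simpa using (hlin.pow 2).div_const 2
    have h := (((hball x hx).sub_const (f x₀)).sub (hlin.smul_const (f' x₀))).sub
      (hsq.smul_const c)
    rw [one_smul] at h
    exact h.hasDerivWithinAt
  have hlo : (fun x => f' x - f' x₀ - (x - x₀) • c) =o[𝓝[ball x₀ r] x₀]
      fun x => (x - x₀) ^ 1 := by
    simpa [hnhds] using hasDerivAt_iff_isLittleO.mp hf'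
  simpa [hnhds] using (convex_ball x₀ r).isLittleO_pow_succ_real (mem_ball_self hr) hderiv hlo

theorem isLittleO_symmetric_second_difference {E : Type*} [NormedAddCommGroup E]
    [NormedSpace ℝ E] {f f' : ℝ → E} {x₀ : ℝ} {c : E}
    (hf : ∀ᶠ x in 𝓝 x₀, HasDerivAt f (f' x) x) (hf' : HasDerivAt f' c x₀) :
    (fun h => f (x₀ + h) + f (x₀ - h) - (2 : ℝ) • f x₀ - h ^ 2 • c) =o[𝓝 0] fun h => h ^ 2 := by
  have hR := isLittleO_taylor_remainder_two hf hf'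
  have hplus : Tendsto (fun h : ℝ => x₀ + h) (𝓝 0) (𝓝 x₀) :=
    (continuous_const_add x₀).tendsto' 0 x₀ (add_zero x₀)
  have hminus : Tendsto (fun h : ℝ => x₀ - h) (𝓝 0) (𝓝 x₀) :=
    (continuous_sub_left x₀).tendsto' 0 x₀ (sub_zero x₀)
  have hRplus := hR.comp_tendsto hplus
  have hRminus := hR.comp_tendsto hminus
  simp only [Function.comp_def, add_sub_cancel_left] at hRplus
  simp only [Function.comp_def, sub_sub_cancel_left, neg_sq] at hRminus
  have hsum := hRplus.add hRminus
  refine hsum.congr_left fun h => ?_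
  module

theorem exists_rescaling_approx_sq_of_isLittleO {D : ℝ → ℝ} {c : ℝ} (hc : c ≠ 0)
    (hD : (fun h => D h - h ^ 2 * c) =o[𝓝 0] fun h => h ^ 2) {C ε : ℝ} (hC : 0 < C)
    (hε : 0 < ε) :
    ∃ δ > (0 : ℝ), ∀ x : ℝ, |x| < C → |c⁻¹ * δ⁻¹ ^ 2 * D (x * δ) - x ^ 2| < ε := by
  have hc' : 0 < |c| := abs_pos.mpr hc
  obtain ⟨r, hr, hball⟩ := eventually_nhds_iff_ball.mp
    (hD.def (show 0 < ε * |c| / C ^ 2 by positivity))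
  obtain ⟨δ, hδ, hCδ⟩ : ∃ δ > 0, C * δ = r := ⟨r / C, by positivity, by field_simp⟩
  refine ⟨δ, hδ, fun x hx => ?_⟩
  have hxδ : x * δ ∈ ball 0 r := by
    rw [mem_ball_zero_iff, Real.norm_eq_abs, abs_mul, abs_of_pos hδ, ← hCδ]
    gcongr
  have hbound := hball _ hxδ
  rw [Real.norm_eq_abs, Real.norm_eq_abs, abs_sq] at hbound
  have hx2 : x ^ 2 < C ^ 2 := sq_lt_sq' (abs_lt.mp hx).1 (abs_lt.mp hx).2
  have hrescale : c⁻¹ * δ⁻¹ ^ 2 * D (x * δ) - x ^ 2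
      = c⁻¹ * δ⁻¹ ^ 2 * (D (x * δ) - (x * δ) ^ 2 * c) := by
    field_simp
  calc |c⁻¹ * δ⁻¹ ^ 2 * D (x * δ) - x ^ 2|
      = |c|⁻¹ * δ⁻¹ ^ 2 * |D (x * δ) - (x * δ) ^ 2 * c| := by
        rw [hrescale, abs_mul, abs_mul, abs_inv, abs_pow, abs_inv, abs_of_pos hδ]
    _ ≤ |c|⁻¹ * δ⁻¹ ^ 2 * (ε * |c| / C ^ 2 * (x * δ) ^ 2) := by gcongr
    _ = ε * (x ^ 2 / C ^ 2) := by field_simp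
    _ < ε := mul_lt_of_lt_one_right hε ((div_lt_one (by positivity)).mpr hx2)

/-- If σ has a second derivative c ≠ 0 at x₀, then squaring is
uniformly approximated on |x| < C by c⁻¹δ⁻²(σ(x₀+xδ)+σ(x₀−xδ)−2σ(x₀)). -/
theorem stmt4 (σ σ' : ℝ → ℝ) (x₀ c : ℝ)
    (h1 : ∀ᶠ x in nhds x₀, HasDerivAt σ (σ' x) x)
    (h2 : HasDerivAt σ' c x₀) (hc : c ≠ 0)
    (C ε : ℝ) (hC : 0 < C) (hε : 0 < ε) :
    ∃ δ > (0:ℝ), ∀ x : ℝ, |x| < C →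
      |c⁻¹ * δ⁻¹ ^ 2 * (σ (x₀ + x * δ) + σ (x₀ - x * δ) - 2 * σ x₀) - x ^ 2| < ε := by
  have hD := isLittleO_symmetric_second_difference h1 h2
  simp only [smul_eq_mul] at hD
  exact exists_rescaling_approx_sq_of_isLittleO hc hD hC hε
end

section
/- Define θ(x) = (1/π)·arcsin(sin(πx)), ν(x) = x + θ(x), ψ(x) = ν(θ(x) − 1/2) + 1. Then for all x ∈ ℝ, Σ_{q=−1}^{2} ψ(x − q/2) = 1, i.e., the shifts of ψ by half-integers q/2 for q ∈ {−1,0,1,2} form a partition of unity (using the 2-periodicity of ψ). -/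
/-!
With θ the triangle wave, ψ = 2θ⁺: since θ x ∈ [-1/2, 1/2], the inner argument θ x − 1/2 lies
where θ is piecewise linear, and ν(θ x − 1/2) + 1 collapses to 2 max(θ x, 0). As θ(x − 1) = −θ x,
the shifts by 0 and 1 add up to 2|θ x|, and those by ±1/2 to 2|θ(x + 1/2)|. Finally
|θ x| + |θ(x + 1/2)| = 1/2 is the identity arcsin |sin t| + arcsin |cos t| = π/2.
-/

open Real

namespace Real

theorem abs_arcsin (x : ℝ) : |arcsin x| = arcsin |x| := by
  rcases le_total 0 x with hx | hx
  · rw [abs_of_nonneg hx, abs_of_nonneg (arcsin_nonneg.2 hx)]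
  · rw [abs_of_nonpos hx, abs_of_nonpos (arcsin_nonpos.2 hx), arcsin_neg]

theorem arcsin_abs_sin_add_arcsin_abs_cos (t : ℝ) :
    arcsin |sin t| + arcsin |cos t| = π / 2 := by
  have hsin : arccos |cos t| = arcsin |sin t| := by
    rw [arccos_eq_arcsin (abs_nonneg _), sq_abs, ← sin_sq, sqrt_sq_eq_abs]
  rw [arcsin_eq_pi_div_two_sub_arccos |cos t|, hsin]
  ring

end Real

noncomputable def triangleWave (x : ℝ) : ℝ := (1 / π) * arcsin (sin (π * x))

theorem abs_triangleWave_le (x : ℝ) : |triangleWave x| ≤ 1 / 2 := by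
  rw [triangleWave, abs_mul, abs_of_pos (by positivity), one_div_mul_eq_div,
    div_le_iff₀ pi_pos, abs_le]
  constructor <;> linarith [neg_pi_div_two_le_arcsin (sin (π * x)),
    arcsin_le_pi_div_two (sin (π * x))]

theorem triangleWave_of_abs_le {x : ℝ} (hx : |x| ≤ 1 / 2) : triangleWave x = x := by
  obtain ⟨h₁, h₂⟩ := abs_le.1 hx
  rw [triangleWave, arcsin_sin (by nlinarith [pi_pos]) (by nlinarith [pi_pos])]
  field_simp

theorem triangleWave_sub_one (x : ℝ) : triangleWave (x - 1) = -triangleWave x := by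
  rw [triangleWave, triangleWave, mul_sub_one, sin_sub_pi, arcsin_neg, mul_neg]

theorem triangleWave_sub_half {a : ℝ} (ha : |a| ≤ 1 / 2) :
    triangleWave (a - 1 / 2) = 2 * a⁺ - a - 1 / 2 := by
  obtain ⟨h₁, h₂⟩ := abs_le.1 ha
  rcases le_total 0 a with h | h
  · rw [posPart_eq_self.2 h, triangleWave_of_abs_le (abs_le.2 ⟨by linarith, by linarith⟩)]
    ring
  · rw [posPart_eq_zero.2 h, show a - 1 / 2 = (a + 1 / 2) - 1 by ring, triangleWave_sub_one,
      triangleWave_of_abs_le (abs_le.2 ⟨by linarith, by linarith⟩)]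
    ring

theorem abs_triangleWave_add_abs_triangleWave_add_half (x : ℝ) :
    |triangleWave x| + |triangleWave (x + 1 / 2)| = 1 / 2 := by
  rw [triangleWave, triangleWave, show π * (x + 1 / 2) = π * x + π / 2 by ring,
    sin_add_pi_div_two, abs_mul, abs_mul, abs_arcsin, abs_arcsin, ← mul_add,
    arcsin_abs_sin_add_arcsin_abs_cos, abs_of_pos (by positivity)]
  field_simp

/-- With θ(x) = (1/π)arcsin(sin πx), ν(x) = x + θ(x),
ψ(x) = ν(θ(x) − 1/2) + 1, the four half-integer shifts of ψ form a partition
of unity: Σ_{q=−1}^{2} ψ(x − q/2) = 1 for all x. -/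
theorem stmt12 (θ ν ψ : ℝ → ℝ)
    (hθ : ∀ x, θ x = (1 / π) * arcsin (Real.sin (π * x)))
    (hν : ∀ x, ν x = x + θ x)
    (hψ : ∀ x, ψ x = ν (θ x - 1/2) + 1) :
    ∀ x : ℝ, ∑ q ∈ Finset.Icc (-1 : ℤ) 2, ψ (x - (q : ℝ) / 2) = 1 := by
  have hθ' : θ = triangleWave := funext hθ
  have hψ' (y : ℝ) : ψ y = 2 * (triangleWave y)⁺ := by
    rw [hψ, hν, hθ', triangleWave_sub_half (abs_triangleWave_le y)]
    ring
  have hpair (y : ℝ) : ψ y + ψ (y - 1) = 2 * |triangleWave y| := by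
    rw [hψ', hψ', triangleWave_sub_one, posPart_neg, ← mul_add, posPart_add_negPart]
  intro x
  rw [show Finset.Icc (-1 : ℤ) 2 = {-1, 0, 1, 2} by decide, Finset.sum_insert (by decide),
    Finset.sum_insert (by decide), Finset.sum_insert (by decide), Finset.sum_singleton]
  push_cast
  rw [show x - -1 / 2 = x + 1 / 2 by ring, show x - 1 / 2 = x + 1 / 2 - 1 by ring,
    show x - 0 / 2 = x by ring, show x - 2 / 2 = x - 1 by ring]
  linarith [hpair x, hpair (x + 1 / 2), abs_triangleWave_add_abs_triangleWave_add_half x]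
end

section
/- For every N ≥ 1 there exists w ∈ ℝ such that the numbers sin(w·1), sin(w·2), …, sin(w·N) are rationally independent (linearly independent over ℚ). -/
/-!
A nonzero rational combination of the functions `x ↦ sin ((k + 1) x)` is a real-analytic function
which is not identically zero (the functions are orthogonal on `[0, 2π]`), so it vanishes only on a
countable set. There are countably many such combinations, so some `w` avoids all their zero sets.
-/

open Real Set intervalIntegral

theorem AnalyticOnNhd.countable_preimage_zero {𝕜 E : Type*} [NontriviallyNormedField 𝕜]
    [ConnectedSpace 𝕜] [SecondCountableTopology 𝕜] [NormedAddCommGroup E] [NormedSpace 𝕜 E]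
    {f : 𝕜 → E} (hf : AnalyticOnNhd 𝕜 f univ) {x : 𝕜} (hx : f x ≠ 0) :
    (f ⁻¹' {0}).Countable := by
  have hdisc : IsDiscrete (f ⁻¹' {0} ∩ univ) :=
    isDiscrete_of_codiscreteWithin (hf.preimage_zero_mem_codiscrete hx)
  simpa using (HereditarilyLindelofSpace.isLindelof _).countable_of_isDiscrete hdisc

theorem exists_linearIndependent_rat_eval {ι : Type*} [Countable ι] {f : ι → ℝ → ℝ}
    (hf : ∀ i, AnalyticOnNhd ℝ (f i) univ) (hli : LinearIndependent ℚ f) :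
    ∃ w : ℝ, LinearIndependent ℚ (fun i => f i w) := by
  set bad : Set ℝ := ⋃ l ∈ {l : ι →₀ ℚ | l ≠ 0}, Finsupp.linearCombination ℚ f l ⁻¹' {0}
  have hbad : bad.Countable := by
    refine (Set.to_countable _).biUnion fun l hl => ?_
    have han : AnalyticOnNhd ℝ (Finsupp.linearCombination ℚ f l) univ := by
      rw [Finsupp.linearCombination_apply, Finsupp.sum]
      refine Finset.analyticOnNhd_sum _ fun i _ => ?_
      simpa only [← Rat.cast_smul_eq_qsmul ℝ] using (hf i).const_smul (c := (l i : ℝ))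
    obtain ⟨x, hx⟩ : ∃ x, Finsupp.linearCombination ℚ f l x ≠ 0 := by
      by_contra! h
      exact hl (linearIndependent_iff.mp hli l (funext h))
    exact han.countable_preimage_zero hx
  obtain ⟨w, hw⟩ := (Set.ne_univ_iff_exists_notMem bad).mp
    fun h => Cardinal.not_countable_real (h ▸ hbad)
  refine ⟨w, linearIndependent_iff.mpr fun l hl => ?_⟩
  by_contra hl0
  refine hw (mem_biUnion hl0 ?_)
  have heval := Finsupp.apply_linearCombination ℚ (LinearMap.proj (φ := fun _ : ℝ => ℝ) w) f l
  simp only [LinearMap.coe_proj, Function.eval] at heval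
  rw [mem_preimage, heval]
  exact hl

theorem integral_cos_int_mul (k : ℤ) :
    ∫ x in (0 : ℝ)..2 * π, cos (k * x) = if k = 0 then 2 * π else 0 := by
  split_ifs with hk
  · simp [hk]
  · have hk' : (k : ℝ) ≠ 0 := Int.cast_ne_zero.mpr hk
    rw [integral_comp_mul_left cos hk', integral_cos, mul_zero, sin_zero,
      show (k : ℝ) * (2 * π) = (2 * k : ℤ) * π by push_cast; ring, sin_int_mul_pi]
    simp

theorem integral_sin_nat_mul_mul_sin_nat_mul {m : ℕ} (n : ℕ) (hm : m ≠ 0) :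
    ∫ x in (0 : ℝ)..2 * π, sin (m * x) * sin (n * x) = if m = n then π else 0 := by
  have hprod : ∀ x : ℝ, sin (m * x) * sin (n * x) =
      (cos (((m - n : ℤ) : ℝ) * x) - cos (((m + n : ℤ) : ℝ) * x)) / 2 := by
    intro x
    push_cast
    rw [sub_mul, add_mul, cos_sub, cos_add]
    ring
  have hint : ∀ k : ℤ, IntervalIntegrable (fun x => cos (k * x)) MeasureTheory.volume 0 (2 * π) :=
    fun k => (continuous_cos.comp (continuous_const_mul _)).intervalIntegrable _ _
  simp_rw [hprod, integral_div, integral_sub (hint _) (hint _), integral_cos_int_mul]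
  have hsum : (m + n : ℤ) ≠ 0 := by omega
  by_cases hmn : m = n
  · rw [if_pos (by omega), if_neg hsum, if_pos hmn]; ring
  · rw [if_neg (by omega), if_neg hsum, if_neg hmn]; ring

theorem linearIndependent_sin_mul_succ :
    LinearIndependent ℝ (fun k : ℕ => fun x : ℝ => sin (x * (k + 1))) := by
  rw [linearIndependent_iff']
  intro s c hc m hm
  have horth (k : ℕ) :
      ∫ x in (0 : ℝ)..2 * π, sin (x * (k + 1)) * sin (x * (m + 1)) = if k = m then π else 0 := by
    simpa [mul_comm] using integral_sin_nat_mul_mul_sin_nat_mul (m := k + 1) (m + 1) k.succ_ne_zero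
  have hint (k : ℕ) : IntervalIntegrable (fun x => c k * (sin (x * (k + 1)) * sin (x * (m + 1))))
      MeasureTheory.volume 0 (2 * π) := by
    apply Continuous.intervalIntegrable
    fun_prop
  have h0 : ∫ x in (0 : ℝ)..2 * π,
      (∑ k ∈ s, c k • fun x : ℝ => sin (x * (k + 1))) x * sin (x * (m + 1)) = 0 := by
    simp only [hc, Pi.zero_apply, zero_mul, integral_zero]
  simp only [Finset.sum_apply, Pi.smul_apply, smul_eq_mul, Finset.sum_mul, mul_assoc] at h0
  rw [integral_finsetSum fun k _ => hint k] at h0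
  simp only [integral_const_mul, horth, mul_ite, mul_zero, Finset.sum_ite_eq', if_pos hm] at h0
  exact (mul_eq_zero.mp h0).resolve_right pi_ne_zero

theorem stmt13_general (N : ℕ) :
    ∃ w : ℝ, LinearIndependent ℚ (fun n : Fin N => Real.sin (w * ((n : ℕ) + 1))) := by
  obtain ⟨w, hw⟩ := exists_linearIndependent_rat_eval
    (fun k x _ => analyticAt_sin.comp (by fun_prop))
    (linearIndependent_sin_mul_succ.restrict_scalars' ℚ)
  exact ⟨w, hw.comp (fun n : Fin N => (n : ℕ)) Fin.val_injective⟩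

/-- For every N ≥ 1 there is w ∈ ℝ such that
sin(w·1),…,sin(w·N) are linearly independent over ℚ. -/
theorem stmt13 (N : ℕ) (hN : 1 ≤ N) :
    ∃ w : ℝ, LinearIndependent ℚ (fun n : Fin N => Real.sin (w * ((n : ℕ) + 1))) :=
  stmt13_general N
end

section
/- Let f : I → ℝ be a nonzero real analytic function on an open interval, let x₀ ∈ I be a zero of f, and suppose ε > 0 is not a critical value of f and −ε is not a critical value of f. Then for all sufficiently small such ε, the two functions f − ε and f + ε together have at least two zeros, each nondegenerate (nonzero derivative at the zero), in any fixed neighborhood of x₀. -/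
/-!
Since `f` is analytic and not identically zero on the interval, its zero `x₀` is isolated, so
there are points `l < x₀ < r` with `[l, r] ⊆ U` and `f l ≠ 0 ≠ f r`. For `0 < ε < min |f l| |f r|`
the intermediate value theorem applied to `|f|` on `[l, x₀]` and on `[x₀, r]` gives two points
where `f = ±ε`, distinct because `f x₀ = 0`. As `±ε` are not critical values, both are
nondegenerate zeros of `f ∓ ε`.
-/

open Set Filter Topology

theorem AnalyticOnNhd.eventually_nhdsNE_ne_zero {𝕜 E : Type*} [NontriviallyNormedField 𝕜]
    [NormedAddCommGroup E] [NormedSpace 𝕜 E] [CompleteSpace E] {f : 𝕜 → E} {s : Set 𝕜} {z₀ : 𝕜}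
    (hf : AnalyticOnNhd 𝕜 f s) (hs : IsPreconnected s) (h₀ : z₀ ∈ s)
    (hne : ∃ z ∈ s, f z ≠ 0) : ∀ᶠ z in 𝓝[≠] z₀, f z ≠ 0 := by
  obtain ⟨z, hz, hfz⟩ := hne
  refine (hf z₀ h₀).eventually_eq_zero_or_eventually_ne_zero.resolve_left fun hzero ↦ hfz ?_
  exact hf.eqOn_zero_of_preconnected_of_eventuallyEq_zero hs h₀ hzero hz

theorem exists_Icc_subset_of_eventually_nhdsNE {α : Type*} [LinearOrder α] [TopologicalSpace α]
    [OrderTopology α] [DenselyOrdered α] [NoMinOrder α] [NoMaxOrder α] {p : α → Prop} {x₀ : α}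
    {V : Set α} (hp : ∀ᶠ x in 𝓝[≠] x₀, p x) (hV : V ∈ 𝓝 x₀) :
    ∃ l r, l < x₀ ∧ x₀ < r ∧ Icc l r ⊆ V ∧ p l ∧ p r := by
  obtain ⟨u, v, ⟨hu, hv⟩, huv⟩ := mem_nhds_iff_exists_Ioo_subset.1 hV
  obtain ⟨l, hpl, hul, hlx⟩ :=
    ((hp.filter_mono (nhdsLT_le_nhdsNE x₀)).and (Ioo_mem_nhdsLT hu)).exists
  obtain ⟨r, hpr, hxr, hrv⟩ :=
    ((hp.filter_mono (nhdsGT_le_nhdsNE x₀)).and (Ioo_mem_nhdsGT hv)).exists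
  exact ⟨l, r, hlx, hxr, (Icc_subset_Ioo hul hrv).trans huv, hpl, hpr⟩

theorem exists_mem_uIcc_norm_eq {α E : Type*} [ConditionallyCompleteLinearOrder α]
    [TopologicalSpace α] [OrderTopology α] [DenselyOrdered α] [SeminormedAddCommGroup E]
    {f : α → E} {u v : α} {ε : ℝ} (hf : ContinuousOn f (uIcc u v)) (hu : f u = 0)
    (hε : 0 ≤ ε) (hεv : ε ≤ ‖f v‖) : ∃ x ∈ uIcc u v, ‖f x‖ = ε := by
  have hmem : ε ∈ uIcc ‖f u‖ ‖f v‖ := by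
    rw [hu, norm_zero, uIcc_of_le (norm_nonneg _)]
    exact ⟨hε, hεv⟩
  exact intermediate_value_uIcc hf.norm hmem

theorem exists_ne_norm_eq_of_continuousOn_Icc {α E : Type*} [ConditionallyCompleteLinearOrder α]
    [TopologicalSpace α] [OrderTopology α] [DenselyOrdered α] [SeminormedAddCommGroup E]
    {f : α → E} {l x₀ r : α} {ε : ℝ} (hf : ContinuousOn f (Icc l r)) (hx₀ : x₀ ∈ Icc l r)
    (hz : f x₀ = 0) (hε : 0 < ε) (hεl : ε ≤ ‖f l‖) (hεr : ε ≤ ‖f r‖) :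
    ∃ x₁ ∈ Icc l r, ∃ x₂ ∈ Icc l r, x₁ ≠ x₂ ∧ ‖f x₁‖ = ε ∧ ‖f x₂‖ = ε := by
  have hlr : l ≤ r := hx₀.1.trans hx₀.2
  obtain ⟨x₁, hx₁, hfx₁⟩ := exists_mem_uIcc_norm_eq
    (hf.mono (uIcc_subset_Icc hx₀ (left_mem_Icc.2 hlr))) hz hε.le hεl
  obtain ⟨x₂, hx₂, hfx₂⟩ := exists_mem_uIcc_norm_eq
    (hf.mono (uIcc_subset_Icc hx₀ (right_mem_Icc.2 hlr))) hz hε.le hεr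
  rw [uIcc_of_ge hx₀.1] at hx₁
  rw [uIcc_of_le hx₀.2] at hx₂
  refine ⟨x₁, ⟨hx₁.1, hx₁.2.trans hx₀.2⟩, x₂, ⟨hx₀.1.trans hx₂.1, hx₂.2⟩, ?_, hfx₁, hfx₂⟩
  rintro rfl
  obtain rfl : x₁ = x₀ := le_antisymm hx₁.2 hx₂.1
  exact hε.ne' (by rw [← hfx₁, hz, norm_zero])

/-- Let f be analytic and not identically zero on an open interval,
x₀ a zero of f, U a neighborhood of x₀. Then for all sufficiently small ε > 0 such
that neither ε nor −ε is a critical value of f, the functions f − ε and f + ε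
together have at least two nondegenerate zeros in U. -/
theorem stmt15 (a b : ℝ) (f : ℝ → ℝ) (hf : AnalyticOn ℝ f (Set.Ioo a b))
    (hne : ∃ x ∈ Set.Ioo a b, f x ≠ 0)
    (x₀ : ℝ) (hx₀ : x₀ ∈ Set.Ioo a b) (hz : f x₀ = 0)
    (U : Set ℝ) (hU : U ∈ nhds x₀) :
    ∃ ε₀ > (0:ℝ), ∀ ε : ℝ, 0 < ε → ε < ε₀ →
      (¬ ∃ x ∈ Set.Ioo a b, f x = ε ∧ deriv f x = 0) →
      (¬ ∃ x ∈ Set.Ioo a b, f x = -ε ∧ deriv f x = 0) →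
      ∃ x₁ ∈ U ∩ Set.Ioo a b, ∃ x₂ ∈ U ∩ Set.Ioo a b, x₁ ≠ x₂ ∧
        (f x₁ = ε ∨ f x₁ = -ε) ∧ deriv f x₁ ≠ 0 ∧
        (f x₂ = ε ∨ f x₂ = -ε) ∧ deriv f x₂ ≠ 0 := by
  have hisol := (isOpen_Ioo.analyticOn_iff_analyticOnNhd.mp hf).eventually_nhdsNE_ne_zero
    isPreconnected_Ioo hx₀ hne
  obtain ⟨l, r, hl, hr, hsub, hfl, hfr⟩ :=
    exists_Icc_subset_of_eventually_nhdsNE hisol (inter_mem hU (isOpen_Ioo.mem_nhds hx₀))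
  have hcont : ContinuousOn f (Icc l r) := hf.continuousOn.mono (hsub.trans inter_subset_right)
  refine ⟨min ‖f l‖ ‖f r‖, lt_min (norm_pos_iff.2 hfl) (norm_pos_iff.2 hfr), ?_⟩
  intro ε hε hεlr hcrit_pos hcrit_neg
  obtain ⟨x₁, hx₁, x₂, hx₂, hx₁₂, hfx₁, hfx₂⟩ :=
    exists_ne_norm_eq_of_continuousOn_Icc hcont ⟨hl.le, hr.le⟩ hz hε
      (hεlr.le.trans (min_le_left _ _)) (hεlr.le.trans (min_le_right _ _))
  have hnondeg : ∀ x ∈ Icc l r, ‖f x‖ = ε →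
      x ∈ U ∩ Ioo a b ∧ (f x = ε ∨ f x = -ε) ∧ deriv f x ≠ 0 := by
    intro x hx hfx
    have hxU := hsub hx
    rw [Real.norm_eq_abs, abs_eq hε.le] at hfx
    refine ⟨hxU, hfx, fun hdx ↦ ?_⟩
    rcases hfx with h | h
    exacts [hcrit_pos ⟨x, hxU.2, h, hdx⟩, hcrit_neg ⟨x, hxU.2, h, hdx⟩]
  obtain ⟨hx₁U, hfx₁, hdx₁⟩ := hnondeg x₁ hx₁ hfx₁
  obtain ⟨hx₂U, hfx₂, hdx₂⟩ := hnondeg x₂ hx₂ hfx₂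
  exact ⟨x₁, hx₁U, x₂, hx₂U, hx₁₂, hfx₁, hdx₁, hfx₂, hdx₂⟩
end
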